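/- Suppose Borel probability measures μ_n on ℝ^d converge weakly to μ, and for each n the exponentials E(Λ_n) form a Schauder basic sequence in L²(μ_n) with basis constant C_n, with C_n → C < ∞. Then E(∩_n Λ_n) is a Schauder basic sequence in L²(μ) with basis constant at most C. -/

import Mathlib

open MeasureTheory Complex Finset Matrix
open scoped ENNReal NNReal

noncomputable def tauMap {d : ℕ} (Rr : Matrix (Fin d) (Fin d) ℝ) (b : Fin d → ℤ)
    (x : Fin d → ℝ) : Fin d → ℝ :=
  Rr⁻¹.mulVec (x + fun i => (b i : ℝ))

noncomputable def measOp {d : ℕ} (Rr : Matrix (Fin d) (Fin d) ℝ) (B : Finset (Fin d → ℤ))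
    (μ : Measure (Fin d → ℝ)) : Measure (Fin d → ℝ) :=
  (B.card : ℝ≥0∞)⁻¹ • ∑ b ∈ B, Measure.map (tauMap Rr b) μ

noncomputable def fourierTf {d : ℕ} (μ : Measure (Fin d → ℝ)) (x : Fin d → ℝ) : ℂ :=
  ∫ t, Complex.exp (2 * Real.pi * Complex.I * ((∑ i, x i * t i : ℝ) : ℂ)) ∂μ

noncomputable def expFn {d : ℕ} (l : Fin d → ℝ) (x : Fin d → ℝ) : ℂ :=
  Complex.exp (2 * Real.pi * Complex.I * ((∑ i, l i * x i : ℝ) : ℂ))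

/-- `Λ` is a spectrum for `μ`: the exponentials `e_λ`, `λ ∈ Λ`, form an orthonormal
basis of `L²(μ)`, expressed as orthonormality together with completeness. -/
def IsSpectral {d : ℕ} (μ : Measure (Fin d → ℝ)) (Λ : Set (Fin d → ℝ)) : Prop :=
  (∀ l1 ∈ Λ, ∀ l2 ∈ Λ, l1 ≠ l2 →
      ∫ x, expFn l1 x * (starRingEnd ℂ) (expFn l2 x) ∂μ = 0) ∧
  (∀ f : (Fin d → ℝ) → ℂ, MemLp f 2 μ →
      (∀ l ∈ Λ, ∫ x, f x * (starRingEnd ℂ) (expFn l x) ∂μ = 0) → f =ᵐ[μ] 0)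

noncomputable def hadamardMatrix {d : ℕ} (R : Matrix (Fin d) (Fin d) ℤ)
    (B L : Finset (Fin d → ℤ)) : Matrix {b // b ∈ B} {l // l ∈ L} ℂ :=
  fun b l => (Real.sqrt B.card : ℂ)⁻¹ * Complex.exp (2 * Real.pi * Complex.I *
    ((∑ i, ((R.map ((↑) : ℤ → ℝ))⁻¹.mulVec (fun j => ((b : Fin d → ℤ) j : ℝ))) i *
      ((l : Fin d → ℤ) i : ℝ) : ℝ) : ℂ))

def IsHadamardPair {d : ℕ} (R : Matrix (Fin d) (Fin d) ℤ)
    (B L : Finset (Fin d → ℤ)) : Prop :=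
  (hadamardMatrix R B L)ᴴ * hadamardMatrix R B L = 1 ∧
  hadamardMatrix R B L * (hadamardMatrix R B L)ᴴ = 1

def PiSet {d : ℕ} (B : Finset (Fin d → ℤ)) : Set (Fin d → ℝ) :=
  {γ | ∀ b ∈ B, ∃ m : ℤ, (∑ i, γ i * (b i : ℝ)) = (m : ℝ)}

/-- `SΛ = ∪_{l∈L} (R^T Λ + l)`. -/
def specOp {d : ℕ} (R : Matrix (Fin d) (Fin d) ℤ) (L : Finset (Fin d → ℤ))
    (Λ : Set (Fin d → ℝ)) : Set (Fin d → ℝ) :=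
  ⋃ l ∈ L, (fun γ => ((R.map ((↑) : ℤ → ℝ))ᵀ).mulVec γ + fun i => (l i : ℝ)) '' Λ

/-- The exponentials indexed by `lam : Fin K → ℝ^d` (an enumeration of a finite subset of `Λ`)
satisfy the Schauder basis inequality with constant `C` in `L²(μ)`. -/
def SchauderConst {d : ℕ} (μ : Measure (Fin d → ℝ)) (Λ : Set (Fin d → ℝ)) (C : ℝ) : Prop :=
  ∀ (K : ℕ) (lam : Fin K → (Fin d → ℝ)), Function.Injective lam → (∀ j, lam j ∈ Λ) →
    ∀ c : Fin K → ℂ, ∀ k ≤ K,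
      Real.sqrt (∫ x, ‖∑ j ∈ Finset.univ.filter (fun j : Fin K => (j : ℕ) < k),
          c j * expFn (lam j) x‖ ^ 2 ∂μ) ≤
        C * Real.sqrt (∫ x, ‖∑ j, c j * expFn (lam j) x‖ ^ 2 ∂μ)

/-! Each side of the basis inequality is the square root of the integral of a bounded continuous
function (the exponentials are unimodular), so it passes to the weak limit, and a non-strict
inequality between convergent sequences survives in the limit. -/

open Filter Topology

lemma norm_expFn {d : ℕ} (l x : Fin d → ℝ) : ‖expFn l x‖ = 1 := by
  rw [expFn, Complex.norm_exp]
  simp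

@[fun_prop]
lemma continuous_expFn {d : ℕ} (l : Fin d → ℝ) : Continuous (expFn l) := by
  unfold expFn
  fun_prop

lemma norm_sum_mul_expFn_le {d : ℕ} {ι : Type*} (s : Finset ι) (c : ι → ℂ)
    (lam : ι → Fin d → ℝ) (x : Fin d → ℝ) :
    ‖∑ j ∈ s, c j * expFn (lam j) x‖ ≤ ∑ j ∈ s, ‖c j‖ :=
  calc ‖∑ j ∈ s, c j * expFn (lam j) x‖ ≤ ∑ j ∈ s, ‖c j * expFn (lam j) x‖ := norm_sum_le _ _
    _ = ∑ j ∈ s, ‖c j‖ := by simp only [norm_mul, norm_expFn, mul_one]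

lemma tendsto_integral_norm_sum_mul_expFn_sq {d : ℕ} {ι κ : Type*} {l : Filter κ}
    {μ : κ → Measure (Fin d → ℝ)} {ν : Measure (Fin d → ℝ)}
    (hconv : ∀ f : BoundedContinuousFunction (Fin d → ℝ) ℝ,
      Tendsto (fun n => ∫ x, f x ∂(μ n)) l (𝓝 (∫ x, f x ∂ν)))
    (s : Finset ι) (c : ι → ℂ) (lam : ι → Fin d → ℝ) :
    Tendsto (fun n => ∫ x, ‖∑ j ∈ s, c j * expFn (lam j) x‖ ^ 2 ∂(μ n)) l
      (𝓝 (∫ x, ‖∑ j ∈ s, c j * expFn (lam j) x‖ ^ 2 ∂ν)) := by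
  have hcont : Continuous fun x => ‖∑ j ∈ s, c j * expFn (lam j) x‖ ^ 2 := by fun_prop
  have hbound (x : Fin d → ℝ) :
      ‖‖∑ j ∈ s, c j * expFn (lam j) x‖ ^ 2‖ ≤ (∑ j ∈ s, ‖c j‖) ^ 2 := by
    rw [norm_pow, norm_norm]
    exact pow_le_pow_left₀ (norm_nonneg _) (norm_sum_mul_expFn_le s c lam x) 2
  exact hconv (BoundedContinuousFunction.ofNormedAddCommGroup _ hcont _ hbound)

theorem schauder_limit_general {d : ℕ} (μ : ℕ → Measure (Fin d → ℝ))
    (ν : Measure (Fin d → ℝ))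
    (hconv : ∀ f : BoundedContinuousFunction (Fin d → ℝ) ℝ,
      Filter.Tendsto (fun n => ∫ x, f x ∂(μ n)) Filter.atTop (nhds (∫ x, f x ∂ν)))
    (Λ : ℕ → Set (Fin d → ℝ)) (C : ℕ → ℝ) (C₀ : ℝ)
    (hSch : ∀ n, SchauderConst (μ n) (Λ n) (C n))
    (hC : Filter.Tendsto C Filter.atTop (nhds C₀)) :
    SchauderConst ν (⋂ n, Λ n) C₀ := by
  intro K lam hinj hmem c k hk
  have hsqrt := Real.continuous_sqrt.tendsto
  have hpartial := (hsqrt _).comp <| tendsto_integral_norm_sum_mul_expFn_sq hconv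
    (Finset.univ.filter fun j : Fin K => (j : ℕ) < k) c lam
  have hfull := hC.mul <| (hsqrt _).comp <|
    tendsto_integral_norm_sum_mul_expFn_sq hconv Finset.univ c lam
  exact le_of_tendsto_of_tendsto' hpartial hfull fun n =>
    hSch n K lam hinj (fun j => Set.mem_iInter.mp (hmem j) n) c k hk

theorem schauder_limit {d : ℕ} (μ : ℕ → Measure (Fin d → ℝ))
    [∀ n, IsProbabilityMeasure (μ n)]
    (ν : Measure (Fin d → ℝ)) [IsProbabilityMeasure ν]
    (hconv : ∀ f : BoundedContinuousFunction (Fin d → ℝ) ℝ,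
      Filter.Tendsto (fun n => ∫ x, f x ∂(μ n)) Filter.atTop (nhds (∫ x, f x ∂ν)))
    (Λ : ℕ → Set (Fin d → ℝ)) (C : ℕ → ℝ) (C₀ : ℝ)
    (hSch : ∀ n, SchauderConst (μ n) (Λ n) (C n))
    (hC : Filter.Tendsto C Filter.atTop (nhds C₀)) :
    SchauderConst ν (⋂ n, Λ n) C₀ :=
  schauder_limit_general μ ν hconv Λ C C₀ hSch hC
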